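/- Let p ∈ R^d, ε > 0, t > 0, and S the smooth orientation matrix S_{uv} = 1/(1 + exp(-(p_v - p_u - ε)/t)). Then trace(exp(S)) - d ≤ exp(d·α) - 1, where α = 1/(1 + exp(ε/t)) and exp(S) is the matrix exponential. -/

import Mathlib

open scoped BigOperators

/-- Tangent-line (convexity) bound for the logistic function. -/
lemma sigmoid_tangent_bound (ε t : ℝ) (ht : 0 < t) (x : ℝ) :
    1 / (1 + Real.exp (-(x - ε) / t)) ≤
      (1 / (1 + Real.exp (ε / t))) *
        Real.exp ((1 - 1 / (1 + Real.exp (ε / t))) / t * x) := by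
  set E : ℝ := Real.exp (ε / t) with hE
  have hEpos : 0 < E := Real.exp_pos _
  set α : ℝ := 1 / (1 + E) with hα
  have hαpos : 0 < α := by positivity
  have hα1 : α ≤ 1 := by
    rw [hα, div_le_one (by positivity)]; linarith
  set y : ℝ := (x - ε) / t with hy
  have hyrw : -(x - ε) / t = -y := by rw [hy]; ring
  have h1α : 1 - α = α * E := by
    rw [hα]; field_simp; ring
  -- key convexity inequality
  have hkey : Real.exp ((1 - α) * (-(ε / t) - y)) ≤ α * (1 + Real.exp (-y)) := by
    have hc := convexOn_exp.2 (Set.mem_univ (0 : ℝ))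
      (Set.mem_univ (-(ε / t) - y)) hαpos.le (sub_nonneg.2 hα1) (by ring)
    simp only [smul_eq_mul, mul_zero, zero_add, Real.exp_zero, mul_one] at hc
    have h2 : (1 - α) * Real.exp (-(ε / t) - y) = α * Real.exp (-y) := by
      rw [h1α, hE, mul_assoc, ← Real.exp_add]
      ring_nf
    calc Real.exp ((1 - α) * (-(ε / t) - y)) ≤ α + (1 - α) * Real.exp (-(ε / t) - y) := hc
      _ = α * (1 + Real.exp (-y)) := by rw [h2]; ring
  have hexp : (1 - α) / t * x = (1 - α) * (y - -(ε / t)) := by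
    rw [hy]; field_simp; ring
  rw [hyrw, hexp, div_le_iff₀ (by positivity)]
  have h3 : (1 : ℝ) = Real.exp ((1 - α) * (y - -(ε / t))) *
      Real.exp ((1 - α) * (-(ε / t) - y)) := by
    rw [← Real.exp_add]
    rw [show (1 - α) * (y - -(ε / t)) + (1 - α) * (-(ε / t) - y) = 0 by ring, Real.exp_zero]
  calc (1 : ℝ) = Real.exp ((1 - α) * (y - -(ε / t))) *
        Real.exp ((1 - α) * (-(ε / t) - y)) := h3
    _ ≤ Real.exp ((1 - α) * (y - -(ε / t))) * (α * (1 + Real.exp (-y))) :=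
        mul_le_mul_of_nonneg_left hkey (Real.exp_pos _).le
    _ = α * Real.exp ((1 - α) * (y - -(ε / t))) * (1 + Real.exp (-y)) := by ring

theorem stmt14 (d : ℕ) (p : Fin d → ℝ) (ε t : ℝ) (hε : ε > 0) (ht : t > 0)
    (S : Matrix (Fin d) (Fin d) ℝ)
    (hS : ∀ u v, S u v = 1 / (1 + Real.exp (-(p v - p u - ε) / t))) :
    (NormedSpace.exp S).trace - d ≤
      Real.exp (d * (1 / (1 + Real.exp (ε / t)))) - 1 := by
  set α : ℝ := 1 / (1 + Real.exp (ε / t)) with hαdef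
  set c : ℝ := (1 - α) / t with hcdef
  have hαpos : 0 < α := by rw [hαdef]; positivity
  -- entrywise bounds
  have h0 : ∀ u v, 0 ≤ S u v := by
    intro u v; rw [hS]; positivity
  have h2 : ∀ u v, S u v ≤ α * Real.exp (c * (p v - p u)) := by
    intro u v
    have := sigmoid_tangent_bound ε t ht (p v - p u)
    rw [hS]
    convert this using 3 <;> ring
  -- nonnegativity of powers
  have hpow0 : ∀ n : ℕ, ∀ u v, 0 ≤ (S ^ n) u v := by
    intro n
    induction n with
    | zero =>
      intro u v
      simp only [pow_zero, Matrix.one_apply]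
      split <;> norm_num
    | succ n ih =>
      intro u v
      rw [pow_succ, Matrix.mul_apply]
      exact Finset.sum_nonneg fun w _ => mul_nonneg (ih u w) (h0 w v)
  -- power bound
  have hpow : ∀ n : ℕ, ∀ u v, (S ^ (n + 1)) u v ≤
      ((d : ℝ) * α) ^ n * α * Real.exp (c * (p v - p u)) := by
    intro n
    induction n with
    | zero =>
      intro u v
      simpa using h2 u v
    | succ n ih =>
      intro u v
      calc (S ^ (n + 2)) u v = ∑ w, S u w * (S ^ (n + 1)) w v := by
            rw [pow_succ', Matrix.mul_apply]
        _ ≤ ∑ w, (α * Real.exp (c * (p w - p u))) *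
              (((d : ℝ) * α) ^ n * α * Real.exp (c * (p v - p w))) := by
            refine Finset.sum_le_sum fun w _ => ?_
            exact mul_le_mul (h2 u w) (ih w v) (hpow0 (n + 1) w v) (by positivity)
        _ = ∑ _w : Fin d, ((d : ℝ) * α) ^ n * α * α * Real.exp (c * (p v - p u)) := by
            refine Finset.sum_congr rfl fun w _ => ?_
            rw [show (α * Real.exp (c * (p w - p u))) *
                (((d : ℝ) * α) ^ n * α * Real.exp (c * (p v - p w))) =
                ((d : ℝ) * α) ^ n * α * α *
                  (Real.exp (c * (p w - p u)) * Real.exp (c * (p v - p w))) from by ring,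
              ← Real.exp_add,
              show c * (p w - p u) + c * (p v - p w) = c * (p v - p u) from by ring]
        _ = ((d : ℝ) * α) ^ (n + 1) * α * Real.exp (c * (p v - p u)) := by
            rw [Finset.sum_const, Finset.card_univ, Fintype.card_fin, nsmul_eq_mul]
            ring
  -- trace bound
  have htr : ∀ n : ℕ, (S ^ (n + 1)).trace ≤ ((d : ℝ) * α) ^ (n + 1) := by
    intro n
    calc (S ^ (n + 1)).trace = ∑ u, (S ^ (n + 1)) u u := by
          simp [Matrix.trace, Matrix.diag]
      _ ≤ ∑ _u : Fin d, ((d : ℝ) * α) ^ n * α * Real.exp (c * (p _u - p _u)) :=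
          Finset.sum_le_sum fun u _ => hpow n u u
      _ = ((d : ℝ) * α) ^ (n + 1) := by
          simp only [sub_self, mul_zero, Real.exp_zero, mul_one, Finset.sum_const,
            Finset.card_univ, Fintype.card_fin, nsmul_eq_mul]
          ring
  -- series machinery
  letI : SeminormedRing (Matrix (Fin d) (Fin d) ℝ) := Matrix.linftyOpSemiNormedRing
  letI : NormedRing (Matrix (Fin d) (Fin d) ℝ) := Matrix.linftyOpNormedRing
  letI : NormedAlgebra ℝ (Matrix (Fin d) (Fin d) ℝ) := Matrix.linftyOpNormedAlgebra
  have hsum : HasSum (fun n : ℕ => ((Nat.factorial n : ℝ)⁻¹) • S ^ n) (NormedSpace.exp S) :=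
    NormedSpace.exp_series_hasSum_exp' S
  have h2sum : HasSum (fun n : ℕ => ((Nat.factorial n : ℝ)⁻¹) * (S ^ n).trace)
      ((NormedSpace.exp S).trace) := by
    have := hsum.mapL (LinearMap.toContinuousLinearMap
      (Matrix.traceLinearMap (Fin d) ℝ ℝ))
    simpa [smul_eq_mul] using this
  have hf0 : ((Nat.factorial 0 : ℝ)⁻¹) * (S ^ 0).trace = (d : ℝ) := by
    simp [Matrix.trace_one]
  have h3 : HasSum (fun n : ℕ => ((Nat.factorial (n + 1) : ℝ)⁻¹) * (S ^ (n + 1)).trace)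
      ((NormedSpace.exp S).trace - (d : ℝ)) := by
    have := (hasSum_nat_add_iff' (f := fun n : ℕ => ((Nat.factorial n : ℝ)⁻¹) * (S ^ n).trace) 1).2 h2sum
    simpa [hf0] using this
  have hg : HasSum (fun n : ℕ => ((Nat.factorial n : ℝ)⁻¹) * ((d : ℝ) * α) ^ n)
      (Real.exp ((d : ℝ) * α)) := by
    have := NormedSpace.exp_series_hasSum_exp' (𝕂 := ℝ) ((d : ℝ) * α)
    rw [← Real.exp_eq_exp_ℝ] at this
    simpa [smul_eq_mul] using this
  have hg1 : HasSum (fun n : ℕ => ((Nat.factorial (n + 1) : ℝ)⁻¹) * ((d : ℝ) * α) ^ (n + 1))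
      (Real.exp ((d : ℝ) * α) - 1) := by
    have := (hasSum_nat_add_iff'
      (f := fun n : ℕ => ((Nat.factorial n : ℝ)⁻¹) * ((d : ℝ) * α) ^ n) 1).2 hg
    simpa using this
  exact hasSum_le (fun n => mul_le_mul_of_nonneg_left (htr n)
    (by positivity)) h3 hg1
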